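/- In the four-valued well-supported model of the grounded rescue-scenario program, saves(resc, resc) has value i, while saves(resc, eve) has value f and saves(resc, jack) has value t; i.e., the inconsistency is confined to literals about resc and the conclusions about eve and jack remain consistent. -/
import Mathlib


/-- Truth values f, u, i, t. -/
inductive TV | f | u | i | t
deriving DecidableEq

/-- Default negation: ∼f=t, ∼u=t, ∼i=i, ∼t=f. -/
def TV.dneg : TV → TV
  | .f => .t | .u => .t | .i => .i | .t => .f

/-- Position in the linear ordering f < u < i < t. -/
def TV.ord : TV → Fin 4
  | .f => 0 | .u => 1 | .i => 2 | .t => 3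

/-- Conjunction = min w.r.t. f < u < i < t. -/
def TV.conj (a b : TV) : TV := if a.ord ≤ b.ord then a else b

/-- The constants of the rescue scenario. -/
inductive Const | resc | eve | jack
deriving DecidableEq

/-- Ground atoms: saves(a,b) and evacuable(a). -/
inductive Atom
  | saves (a b : Const)
  | evac (a : Const)
deriving DecidableEq

/-- Classical literals. -/
inductive Lit (P : Type) | pos (p : P) | neg (p : P)
deriving DecidableEq

/-- The complement of a literal. -/
def Lit.compl {P : Type} : Lit P → Lit P
  | .pos p => .neg p | .neg p => .pos p

open Classical in
/-- The four-valued truth value of a literal under an interpretation. -/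
noncomputable def val {P : Type} (I : Set (Lit P)) (ℓ : Lit P) : TV :=
  if ℓ ∈ I then (if ℓ.compl ∈ I then TV.i else TV.t)
  else (if ℓ.compl ∈ I then TV.f else TV.u)

open Const Atom in
/-- Closure under the grounded rescue program: contains the facts; for the
rule saves(resc,P) :- ∼saves(P,P), evacuable(P), a body of value t adds the
head and a body of value i adds the head together with its negation;
analogously for the rule ¬saves(resc,P) :- saves(P,P). -/
noncomputable def RescueClosed (I : Set (Lit Atom)) : Prop :=
  Lit.pos (saves eve eve) ∈ I ∧ Lit.neg (saves jack jack) ∈ I ∧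
  Lit.neg (saves resc resc) ∈ I ∧
  Lit.pos (evac eve) ∈ I ∧ Lit.pos (evac jack) ∈ I ∧ Lit.pos (evac resc) ∈ I ∧
  (∀ P : Const,
    ((val I (Lit.pos (saves P P))).dneg.conj (val I (Lit.pos (evac P))) = TV.t →
        Lit.pos (saves resc P) ∈ I) ∧
    ((val I (Lit.pos (saves P P))).dneg.conj (val I (Lit.pos (evac P))) = TV.i →
        Lit.pos (saves resc P) ∈ I ∧ Lit.neg (saves resc P) ∈ I)) ∧
  (∀ P : Const,
    (val I (Lit.pos (saves P P)) = TV.t → Lit.neg (saves resc P) ∈ I) ∧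
    (val I (Lit.pos (saves P P)) = TV.i →
        Lit.neg (saves resc P) ∈ I ∧ Lit.pos (saves resc P) ∈ I))

open Const Atom in
noncomputable def Mres : Set (Lit Atom) :=
  {Lit.pos (saves eve eve), Lit.neg (saves jack jack), Lit.neg (saves resc resc),
   Lit.pos (saves resc resc), Lit.pos (evac eve), Lit.pos (evac jack),
   Lit.pos (evac resc), Lit.neg (saves resc eve), Lit.pos (saves resc jack)}

open Const Atom in
lemma Mres_mem (x : Lit Atom) :
    x ∈ Mres ↔ (x = Lit.pos (saves eve eve) ∨ x = Lit.neg (saves jack jack) ∨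
      x = Lit.neg (saves resc resc) ∨ x = Lit.pos (saves resc resc) ∨
      x = Lit.pos (evac eve) ∨ x = Lit.pos (evac jack) ∨
      x = Lit.pos (evac resc) ∨ x = Lit.neg (saves resc eve) ∨
      x = Lit.pos (saves resc jack)) := by
  simp [Mres, Set.mem_insert_iff]

lemma val_eq_t {P : Type} {I : Set (Lit P)} {l : Lit P}
    (h1 : l ∈ I) (h2 : l.compl ∉ I) : val I l = TV.t := by
  unfold val; rw [if_pos h1, if_neg h2]

lemma val_eq_i {P : Type} {I : Set (Lit P)} {l : Lit P}
    (h1 : l ∈ I) (h2 : l.compl ∈ I) : val I l = TV.i := by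
  unfold val; rw [if_pos h1, if_pos h2]

lemma val_eq_f {P : Type} {I : Set (Lit P)} {l : Lit P}
    (h1 : l ∉ I) (h2 : l.compl ∈ I) : val I l = TV.f := by
  unfold val; rw [if_neg h1, if_pos h2]

lemma val_pos_of_mem {P : Type} {I : Set (Lit P)} {p : P}
    (h : Lit.pos p ∈ I) : val I (Lit.pos p) = TV.t ∨ val I (Lit.pos p) = TV.i := by
  by_cases hn : Lit.neg p ∈ I
  · exact Or.inr (val_eq_i h hn)
  · exact Or.inl (val_eq_t h hn)

lemma val_neg_cases {P : Type} {I : Set (Lit P)} {p : P}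
    (h : Lit.neg p ∈ I) : val I (Lit.pos p) = TV.f ∨ val I (Lit.pos p) = TV.i := by
  by_cases hp : Lit.pos p ∈ I
  · exact Or.inr (val_eq_i hp h)
  · exact Or.inl (val_eq_f hp h)

open Const Atom in
lemma vee : val Mres (Lit.pos (saves eve eve)) = TV.t :=
  val_eq_t (by simp [Mres_mem]) (by simp [Mres_mem, Lit.compl])

open Const Atom in
lemma vjj : val Mres (Lit.pos (saves jack jack)) = TV.f :=
  val_eq_f (by simp [Mres_mem]) (by simp [Mres_mem, Lit.compl])

open Const Atom in
lemma vrr : val Mres (Lit.pos (saves resc resc)) = TV.i :=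
  val_eq_i (by simp [Mres_mem]) (by simp [Mres_mem, Lit.compl])

open Const Atom in
lemma vev (c : Const) : val Mres (Lit.pos (evac c)) = TV.t :=
  val_eq_t (by cases c <;> simp [Mres_mem]) (by cases c <;> simp [Mres_mem, Lit.compl])

open Const Atom in
lemma vre : val Mres (Lit.pos (saves resc eve)) = TV.f :=
  val_eq_f (by simp [Mres_mem]) (by simp [Mres_mem, Lit.compl])

open Const Atom in
lemma vrj : val Mres (Lit.pos (saves resc jack)) = TV.t :=
  val_eq_t (by simp [Mres_mem]) (by simp [Mres_mem, Lit.compl])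

open Const Atom in
/-- in the four-valued well-supported model (the least set of
conclusions closed under the rescue program), saves(resc,resc) has value i,
saves(resc,eve) has value f, and saves(resc,jack) has value t: the
inconsistency is confined to resc, and the conclusions about eve and jack are
consistent. -/
theorem rescue_wsm_values :
    ∃ M : Set (Lit Atom), RescueClosed M ∧ (∀ J, RescueClosed J → M ⊆ J) ∧
      val M (Lit.pos (saves resc resc)) = TV.i ∧
      val M (Lit.pos (saves resc eve)) = TV.f ∧
      val M (Lit.pos (saves resc jack)) = TV.t := by
  refine ⟨Mres, ⟨?_, ?_, ?_, ?_, ?_, ?_, ?_, ?_⟩, ?_, vrr, vre, vrj⟩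
  · simp [Mres_mem]
  · simp [Mres_mem]
  · simp [Mres_mem]
  · simp [Mres_mem]
  · simp [Mres_mem]
  · simp [Mres_mem]
  · intro P
    cases P
    · rw [vrr, vev]
      refine ⟨fun h => by simp [TV.dneg, TV.conj, TV.ord] at h,
        fun _ => ⟨by simp [Mres_mem], by simp [Mres_mem]⟩⟩
    · rw [vee, vev]
      exact ⟨fun h => by simp [TV.dneg, TV.conj, TV.ord] at h,
        fun h => by simp [TV.dneg, TV.conj, TV.ord] at h⟩
    · rw [vjj, vev]
      exact ⟨fun _ => by simp [Mres_mem],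
        fun h => by simp [TV.dneg, TV.conj, TV.ord] at h⟩
  · intro P
    cases P
    · rw [vrr]
      exact ⟨fun h => by simp at h, fun _ => ⟨by simp [Mres_mem], by simp [Mres_mem]⟩⟩
    · rw [vee]
      exact ⟨fun _ => by simp [Mres_mem], fun h => by simp at h⟩
    · rw [vjj]
      exact ⟨fun h => by simp at h, fun h => by simp at h⟩
  · rintro J ⟨h1, h2, h3, h4, h5, h6, hR1, hR2⟩ x hx
    have hrr : Lit.pos (saves resc resc) ∈ J := by
      rcases val_neg_cases h3 with hv | hv
      · rcases val_pos_of_mem h6 with he | he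
        · exact (hR1 resc).1 (by rw [hv, he]; rfl)
        · exact ((hR1 resc).2 (by rw [hv, he]; rfl)).1
      · exact ((hR2 resc).2 hv).2
    have hre : Lit.neg (saves resc eve) ∈ J := by
      rcases val_pos_of_mem h1 with hv | hv
      · exact (hR2 eve).1 hv
      · exact ((hR2 eve).2 hv).1
    have hrj : Lit.pos (saves resc jack) ∈ J := by
      rcases val_neg_cases h2 with hv | hv
      · rcases val_pos_of_mem h5 with he | he
        · exact (hR1 jack).1 (by rw [hv, he]; rfl)
        · exact ((hR1 jack).2 (by rw [hv, he]; rfl)).1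
      · exact ((hR2 jack).2 hv).2
    rw [Mres_mem] at hx
    rcases hx with rfl | rfl | rfl | rfl | rfl | rfl | rfl | rfl | rfl <;>
      assumption
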